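/- Let m be a positive integer and α ∈ (0,1]. There exists a constant C depending only on m and α with the following property. Let t₀ ∈ ℝ, δ > 0, I = (t₀−δ, t₀+δ), and let f ∈ C^{m,α}(Ī, ℝ) be such that f does not change sign on I (f ≥ 0 on all of I, or f ≤ 0 on all of I) and f' does not change sign on I (f' ≥ 0 on all of I, or f' ≤ 0 on all of I). Then for all s = 1,…,m: |f^{(s)}(t₀)| ≤ C |I|^{-s} ( |f(t₀)| + |f(t₀)|^{(m+α−s)/(m+α)} · (Höld_{α,I}(f^{(m)}))^{s/(m+α)} · |I|^s ). -/

import Mathlib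

/-!
Since `f` and `f'` keep their sign on `I`, `|f|` is monotone on `I`, so on one side of `t₀` we
have `|f| ≤ |f(t₀)|`. Place the nodes `t₀ + j x`, `0 ≤ j ≤ m`, on that side. A finite-difference
formula that is exact on polynomials of degree `≤ m` (a row of the inverse Vandermonde matrix)
extracts `x ^ s f^{(s)}(t₀) / s!` from the values of the Taylor polynomial at the nodes, and these
differ from the values of `f` by at most `H (m |x|) ^ (m + α)` (Taylor with Hölder remainder).
Hence `|f^{(s)}(t₀)| |x| ^ s ≲ |f(t₀)| + H |x| ^ (m + α)` for every `|x| ≲ |I|`; taking `|x|`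
where the two terms balance, or `|x| ~ |I|` if that scale is too large, gives the estimate.
-/

open Set MeasureTheory Real

noncomputable section

/-- `f` is absolutely continuous on the set `S` : for every `ε > 0` there is `δ > 0` such
that for any finitely many non-overlapping intervals `[u i, v i] ⊆ S` of total length `< δ`
the sum `∑ ‖f (v i) - f (u i)‖` is `< ε`. -/
def AbsContOn {E : Type*} [NormedAddCommGroup E] (f : ℝ → E) (S : Set ℝ) : Prop :=
  ∀ ε : ℝ, 0 < ε → ∃ δ : ℝ, 0 < δ ∧
    ∀ (N : ℕ) (u v : Fin N → ℝ),
      (∀ i, u i ≤ v i ∧ Set.Icc (u i) (v i) ⊆ S) →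
      (∀ i j, i ≠ j → Disjoint (Set.Ioo (u i) (v i)) (Set.Ioo (u j) (v j))) →
      (∑ i, (v i - u i)) < δ →
      (∑ i, ‖f (v i) - f (u i)‖) < ε

/-- `d (i+1)` is the derivative of `d i` on `S` for all `i < k`; thus `d i` is the `i`-th
derivative of `d 0` on `S` for `i ≤ k`. -/
def DerivChain {E : Type*} [NormedAddCommGroup E] [NormedSpace ℝ E]
    (d : ℕ → ℝ → E) (k : ℕ) (S : Set ℝ) : Prop :=
  ∀ i < k, ∀ x ∈ S, HasDerivWithinAt (d i) (d (i + 1) x) S x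

/-- Hölder constant of exponent `a` of `g` on `S`. -/
def HolderConst {E : Type*} [NormedAddCommGroup E] (a : ℝ) (S : Set ℝ) (g : ℝ → E) : ℝ :=
  sSup {r : ℝ | ∃ x ∈ S, ∃ y ∈ S, x ≠ y ∧ r = ‖g x - g y‖ / |x - y| ^ a}

/-- Membership in `C^{k,1}(S)`, encoded via the chain of derivatives `d`:
`d 0` is `k` times differentiable with `i`-th derivative `d i`, and the top
derivative `d k` is Lipschitz. -/
def MemCk1 {E : Type*} [NormedAddCommGroup E] [NormedSpace ℝ E]
    (d : ℕ → ℝ → E) (k : ℕ) (S : Set ℝ) : Prop :=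
  DerivChain d k S ∧ ∃ L : ℝ, ∀ x ∈ S, ∀ y ∈ S, ‖d k x - d k y‖ ≤ L * |x - y|

/-- The `C^{k,1}`-norm: sup of all derivatives up to order `k` plus the Lipschitz
(Hölder-1) constant of the `k`-th derivative. -/
def CNorm {E : Type*} [NormedAddCommGroup E] (d : ℕ → ℝ → E) (k : ℕ) (S : Set ℝ) : ℝ :=
  sSup {r : ℝ | ∃ i ≤ k, ∃ x ∈ S, r = ‖d i x‖} + HolderConst 1 S (d k)

open Filter Topology
open scoped Nat

namespace DerivChain

variable {E : Type*} [NormedAddCommGroup E] [NormedSpace ℝ E] {d : ℕ → ℝ → E} {m : ℕ}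
  {S T : Set ℝ}

theorem mono (hd : DerivChain d m S) (hTS : T ⊆ S) : DerivChain d m T :=
  fun i hi x hx => (hd i hi x (hTS hx)).mono hTS

theorem shift (hd : DerivChain d (m + 1) S) : DerivChain (fun i => d (i + 1)) m S :=
  fun i hi x hx => hd (i + 1) (by omega) x hx

end DerivChain

theorem DerivChain.monotoneOn_or_antitoneOn {d : ℕ → ℝ → ℝ} {m : ℕ} {U : Set ℝ}
    (hd : DerivChain d m U) (hm : 0 < m) (hU : IsOpen U) (hUc : Convex ℝ U)
    (h₁ : (∀ t ∈ U, 0 ≤ d 1 t) ∨ (∀ t ∈ U, d 1 t ≤ 0)) :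
    MonotoneOn (d 0) U ∨ AntitoneOn (d 0) U := by
  have hcont : ContinuousOn (d 0) U := fun x hx => (hd 0 hm x hx).continuousWithinAt
  have hderiv : ∀ x ∈ interior U, HasDerivWithinAt (d 0) (d 1 x) (interior U) x := by
    rw [hU.interior_eq]; exact hd 0 hm
  rcases h₁ with h₁ | h₁
  · exact .inl <| monotoneOn_of_hasDerivWithinAt_nonneg hUc hcont hderiv
      (by rwa [hU.interior_eq])
  · exact .inr <| antitoneOn_of_hasDerivWithinAt_nonpos hUc hcont hderiv
      (by rwa [hU.interior_eq])

theorem holderConst_nonneg {E : Type*} [NormedAddCommGroup E] (a : ℝ) (S : Set ℝ) (g : ℝ → E) :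
    0 ≤ HolderConst a S g :=
  Real.sSup_nonneg fun _ ⟨_, _, _, _, _, hr⟩ => hr ▸ by positivity

theorem norm_sub_le_holderConst_mul {E : Type*} [NormedAddCommGroup E] {a : ℝ} {S : Set ℝ}
    {g : ℝ → E} (hg : ∃ H, ∀ x ∈ S, ∀ y ∈ S, ‖g x - g y‖ ≤ H * |x - y| ^ a) {x y : ℝ}
    (hx : x ∈ S) (hy : y ∈ S) : ‖g x - g y‖ ≤ HolderConst a S g * |x - y| ^ a := by
  obtain ⟨H, hH⟩ := hg
  rcases eq_or_ne x y with rfl | hxy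
  · simpa using mul_nonneg (holderConst_nonneg a S g) (Real.rpow_nonneg (abs_nonneg 0) a)
  have hpos : 0 < |x - y| ^ a := Real.rpow_pos_of_pos (abs_pos.2 (sub_ne_zero.2 hxy)) a
  have hbdd : BddAbove {r : ℝ | ∃ x ∈ S, ∃ y ∈ S, x ≠ y ∧ r = ‖g x - g y‖ / |x - y| ^ a} := by
    refine ⟨H, ?_⟩
    rintro _ ⟨x, hx, y, hy, hxy, rfl⟩
    exact (div_le_iff₀ (Real.rpow_pos_of_pos (abs_pos.2 (sub_ne_zero.2 hxy)) a)).2 (hH x hx y hy)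
  rw [← div_le_iff₀ hpos]
  exact le_csSup hbdd ⟨x, hx, y, hy, hxy, rfl⟩

theorem monotoneOn_abs_or_antitoneOn_abs {α : Type*} [Preorder α] {f : α → ℝ} {D : Set α}
    (hf : MonotoneOn f D ∨ AntitoneOn f D) (hsign : (∀ x ∈ D, 0 ≤ f x) ∨ (∀ x ∈ D, f x ≤ 0)) :
    MonotoneOn (fun x => |f x|) D ∨ AntitoneOn (fun x => |f x|) D := by
  rcases hf with hf | hf <;> rcases hsign with hs | hs
  · exact .inl fun x hx y hy hxy => by
      simpa only [abs_of_nonneg (hs x hx), abs_of_nonneg (hs y hy)] using hf hx hy hxy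
  · exact .inr fun x hx y hy hxy => by
      simpa only [abs_of_nonpos (hs x hx), abs_of_nonpos (hs y hy), neg_le_neg_iff] using
        hf hx hy hxy
  · exact .inr fun x hx y hy hxy => by
      simpa only [abs_of_nonneg (hs x hx), abs_of_nonneg (hs y hy)] using hf hx hy hxy
  · exact .inl fun x hx y hy hxy => by
      simpa only [abs_of_nonpos (hs x hx), abs_of_nonpos (hs y hy), neg_le_neg_iff] using
        hf hx hy hxy

theorem exists_abs_le_abs_one_side {f : ℝ → ℝ} {D : Set ℝ} {t₀ : ℝ} (ht₀ : t₀ ∈ D)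
    (hf : MonotoneOn (fun x => |f x|) D ∨ AntitoneOn (fun x => |f x|) D) :
    ∃ σ : ℝ, |σ| = 1 ∧ ∀ u ≥ 0, t₀ + σ * u ∈ D → |f (t₀ + σ * u)| ≤ |f t₀| := by
  rcases hf with hf | hf
  · exact ⟨-1, by norm_num, fun u hu huD => hf huD ht₀ (by linarith)⟩
  · exact ⟨1, by norm_num, fun u hu huD => hf ht₀ huD (by linarith)⟩

def taylorSum (d : ℕ → ℝ → ℝ) (m : ℕ) (t₀ u : ℝ) : ℝ :=
  ∑ i ∈ Finset.range (m + 1), d i t₀ / i ! * (u - t₀) ^ i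

theorem taylorSum_self (d : ℕ → ℝ → ℝ) (m : ℕ) (t₀ : ℝ) : taylorSum d m t₀ t₀ = d 0 t₀ := by
  simp [taylorSum, Finset.sum_range_succ']

theorem hasDerivAt_taylorSum (d : ℕ → ℝ → ℝ) (m : ℕ) (t₀ u : ℝ) :
    HasDerivAt (taylorSum d (m + 1) t₀) (taylorSum (fun i => d (i + 1)) m t₀ u) u := by
  have hsum : HasDerivAt (taylorSum d (m + 1) t₀)
      (∑ i ∈ Finset.range (m + 2), d i t₀ / i ! * (i * (u - t₀) ^ (i - 1))) u :=
    HasDerivAt.fun_sum fun i _ => by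
      simpa using (((hasDerivAt_id u).sub_const t₀).pow i).const_mul (d i t₀ / (i ! : ℝ))
  convert hsum using 1
  rw [Finset.sum_range_succ']
  simp only [taylorSum, Nat.cast_zero, zero_mul, mul_zero, add_zero, Nat.add_sub_cancel]
  refine Finset.sum_congr rfl fun i _ => ?_
  rw [Nat.factorial_succ]
  push_cast
  field_simp

theorem abs_sub_taylorSum_le {S : Set ℝ} (hS : Convex ℝ S) {t₀ B : ℝ} (ht₀ : t₀ ∈ S) {m : ℕ}
    {d : ℕ → ℝ → ℝ} (hd : DerivChain d m S) {t : ℝ} (ht : t ∈ S)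
    (hB : ∀ u ∈ uIcc t₀ t, |d m u - d m t₀| ≤ B) :
    |d 0 t - taylorSum d m t₀ t| ≤ B * |t - t₀| ^ m := by
  induction m generalizing d t with
  | zero => simpa [taylorSum] using hB t right_mem_uIcc
  | succ m ih =>
    have hB₀ : 0 ≤ B := by simpa using hB t₀ left_mem_uIcc
    have htS : uIcc t₀ t ⊆ S := hS.ordConnected.uIcc_subset ht₀ ht
    have hderiv : ∀ u ∈ uIcc t₀ t, HasDerivWithinAt (fun v => d 0 v - taylorSum d (m + 1) t₀ v)
        (d 1 u - taylorSum (fun i => d (i + 1)) m t₀ u) (uIcc t₀ t) u := fun u hu =>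
      ((hd 0 (by omega) u (htS hu)).mono htS).sub (hasDerivAt_taylorSum d m t₀ u).hasDerivWithinAt
    have hbound : ∀ u ∈ uIcc t₀ t,
        ‖d 1 u - taylorSum (fun i => d (i + 1)) m t₀ u‖ ≤ B * |t - t₀| ^ m := fun u hu =>
      calc _ ≤ B * |u - t₀| ^ m := ih hd.shift (htS hu) fun v hv =>
              hB v (uIcc_subset_uIcc left_mem_uIcc hu hv)
        _ ≤ B * |t - t₀| ^ m := by gcongr B * ?_ ^ m; exact abs_sub_left_of_mem_uIcc hu
    have hmvt := (convex_uIcc t₀ t).norm_image_sub_le_of_norm_hasDerivWithin_le hderiv hbound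
      left_mem_uIcc right_mem_uIcc
    rw [taylorSum_self, sub_self, sub_zero, Real.norm_eq_abs, Real.norm_eq_abs] at hmvt
    calc _ ≤ B * |t - t₀| ^ m * |t - t₀| := hmvt
      _ = B * |t - t₀| ^ (m + 1) := by ring

/-- Row `s` holds the weights `w` of the finite-difference formula
`∑ j, w j * P (t₀ + j * x) = x ^ s * P^{(s)}(t₀) / s!`, exact for polynomials `P` of
degree `≤ m`. -/
def fdWeights (m : ℕ) : Matrix (Fin (m + 1)) (Fin (m + 1)) ℝ :=
  (Matrix.vandermonde fun i => ((i : ℕ) : ℝ))⁻¹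

theorem sum_fdWeights_mul_pow (m : ℕ) (s k : Fin (m + 1)) :
    ∑ j, fdWeights m s j * ((j : ℕ) : ℝ) ^ (k : ℕ) = if s = k then 1 else 0 := by
  have hdet : IsUnit (Matrix.vandermonde fun i : Fin (m + 1) => ((i : ℕ) : ℝ)).det :=
    (Matrix.det_vandermonde_ne_zero_iff.2 fun i j hij => Fin.ext (by exact_mod_cast hij)).isUnit
  simpa [fdWeights, Matrix.mul_apply, Matrix.one_apply] using
    congrFun (congrFun (Matrix.nonsing_inv_mul _ hdet) s) k

theorem sum_fdWeights_mul_sum_pow (m : ℕ) (s : Fin (m + 1)) (c : ℕ → ℝ) (x : ℝ) :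
    ∑ j, fdWeights m s j * ∑ i ∈ Finset.range (m + 1), c i * (((j : ℕ) : ℝ) * x) ^ i =
      c s * x ^ (s : ℕ) := by
  calc _ = ∑ k : Fin (m + 1), c k * x ^ (k : ℕ) *
        ∑ j, fdWeights m s j * ((j : ℕ) : ℝ) ^ (k : ℕ) := by
        simp_rw [Finset.sum_range, Finset.mul_sum]
        rw [Finset.sum_comm]
        refine Finset.sum_congr rfl fun k _ => Finset.sum_congr rfl fun j _ => ?_
        ring
    _ = c s * x ^ (s : ℕ) := by simp [sum_fdWeights_mul_pow]

theorem add_natCast_mul_mem_uIcc (t₀ x : ℝ) {j m : ℕ} (hj : j ≤ m) :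
    t₀ + j * x ∈ uIcc t₀ (t₀ + m * x) := by
  have hjm : (j : ℝ) ≤ m := by exact_mod_cast hj
  rcases le_total 0 x with hx | hx
  · rw [uIcc_of_le (by nlinarith)]; constructor <;> nlinarith
  · rw [uIcc_of_ge (by nlinarith)]; constructor <;> nlinarith

theorem abs_mul_pow_le_of_nodes {m : ℕ} {d : ℕ → ℝ → ℝ} {t₀ x M B : ℝ}
    (hd : DerivChain d m (uIcc t₀ (t₀ + m * x)))
    (hM : ∀ j : Fin (m + 1), |d 0 (t₀ + j * x)| ≤ M)
    (hB : ∀ u ∈ uIcc t₀ (t₀ + m * x), |d m u - d m t₀| ≤ B) (s : Fin (m + 1)) :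
    |d s t₀| * |x| ^ (s : ℕ) ≤ s ! * (∑ j, |fdWeights m s j|) * (M + B * (m * |x|) ^ m) := by
  set P : Fin (m + 1) → ℝ := fun j => taylorSum d m t₀ (t₀ + j * x)
  have hB₀ : 0 ≤ B := by simpa using hB t₀ left_mem_uIcc
  have hP : ∀ j, |P j| ≤ M + B * (m * |x|) ^ m := by
    intro j
    have hj := add_natCast_mul_mem_uIcc t₀ x j.is_le
    have hR := abs_sub_taylorSum_le (convex_uIcc _ _) left_mem_uIcc hd hj fun u hu =>
      hB u (uIcc_subset_uIcc left_mem_uIcc hj hu)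
    have hdist : |t₀ + j * x - t₀| ≤ m * |x| := by
      rw [add_sub_cancel_left, abs_mul, Nat.abs_cast]
      gcongr
      exact_mod_cast j.is_le
    calc |P j| ≤ |d 0 (t₀ + j * x)| + |d 0 (t₀ + j * x) - P j| := by
          linarith [abs_sub_abs_le_abs_sub (P j) (d 0 (t₀ + j * x)),
            abs_sub_comm (P j) (d 0 (t₀ + j * x))]
      _ ≤ M + B * (m * |x|) ^ m := add_le_add (hM j) (hR.trans (by gcongr))
  have hsum : ∑ j, fdWeights m s j * P j = d s t₀ / s ! * x ^ (s : ℕ) := by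
    simpa only [P, taylorSum, add_sub_cancel_left] using
      sum_fdWeights_mul_sum_pow m s (fun i => d i t₀ / i !) x
  calc |d s t₀| * |x| ^ (s : ℕ) = s ! * |∑ j, fdWeights m s j * P j| := by
        rw [hsum, abs_mul, abs_div, abs_pow, Nat.abs_cast]
        field_simp
    _ ≤ s ! * ∑ j, |fdWeights m s j| * (M + B * (m * |x|) ^ m) := by
        gcongr
        refine (Finset.abs_sum_le_sum_abs _ _).trans (Finset.sum_le_sum fun j _ => ?_)
        rw [abs_mul]
        gcongr
        exact hP j
    _ = _ := by rw [← Finset.sum_mul, mul_assoc]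

theorem abs_mul_pow_le_of_holder {m : ℕ} {α : ℝ} (hα : 0 < α) {d : ℕ → ℝ → ℝ} {t₀ x M H : ℝ}
    (hd : DerivChain d m (uIcc t₀ (t₀ + m * x)))
    (hM : ∀ j : Fin (m + 1), |d 0 (t₀ + j * x)| ≤ M) (hH₀ : 0 ≤ H)
    (hH : ∀ u ∈ uIcc t₀ (t₀ + m * x), |d m u - d m t₀| ≤ H * |u - t₀| ^ α) (s : Fin (m + 1)) :
    |d s t₀| * |x| ^ (s : ℕ) ≤
      s ! * (∑ j, |fdWeights m s j|) * (1 + (m : ℝ) ^ (m + α)) * (M + H * |x| ^ (m + α)) := by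
  have hM₀ : 0 ≤ M := (abs_nonneg _).trans (hM 0)
  have hB : ∀ u ∈ uIcc t₀ (t₀ + m * x), |d m u - d m t₀| ≤ H * (m * |x|) ^ α := by
    intro u hu
    have hdist : |u - t₀| ≤ m * |x| := by
      simpa [abs_mul] using abs_sub_left_of_mem_uIcc hu
    exact (hH u hu).trans (by gcongr)
  have hpow : (m * |x|) ^ α * (m * |x|) ^ m = (m : ℝ) ^ (m + α) * |x| ^ (m + α) := by
    rw [← Real.rpow_natCast, ← Real.rpow_add' (by positivity) (by positivity), add_comm α,
      Real.mul_rpow (by positivity) (by positivity)]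
  have hX : 0 ≤ H * |x| ^ (m + α) := by positivity
  calc |d s t₀| * |x| ^ (s : ℕ)
      ≤ s ! * (∑ j, |fdWeights m s j|) * (M + H * (m * |x|) ^ α * (m * |x|) ^ m) :=
        abs_mul_pow_le_of_nodes hd hM hB s
    _ = s ! * (∑ j, |fdWeights m s j|) * (M + (m : ℝ) ^ (m + α) * (H * |x| ^ (m + α))) := by
        rw [mul_assoc H, hpow]; ring
    _ ≤ s ! * (∑ j, |fdWeights m s j|) * ((1 + (m : ℝ) ^ (m + α)) * (M + H * |x| ^ (m + α))) := by
        gcongr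
        nlinarith [Real.rpow_nonneg (Nat.cast_nonneg m) (m + α)]
    _ = _ := by ring

theorem nonpos_of_forall_le_mul_rpow {D c q h₀ : ℝ} (hq : 0 < q) (hh₀ : 0 < h₀)
    (hD : ∀ h, 0 < h → h ≤ h₀ → D ≤ c * h ^ q) : D ≤ 0 := by
  have hlim : Tendsto (fun h : ℝ => c * h ^ q) (𝓝[>] 0) (𝓝 0) := by
    have := ((Real.continuousAt_rpow_const 0 q (.inr hq.le)).tendsto.const_mul c).mono_left
      (nhdsWithin_le_nhds (s := Ioi 0))
    rwa [Real.zero_rpow hq.ne', mul_zero] at this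
  refine ge_of_tendsto hlim ?_
  filter_upwards [Ioc_mem_nhdsGT hh₀] with h hh using hD h hh.1 hh.2

theorem le_of_forall_mul_rpow_le {D K M H h₀ s p : ℝ} (hK : 0 ≤ K) (hM : 0 ≤ M) (hH : 0 ≤ H)
    (hh₀ : 0 < h₀) (hp : 0 < p) (hsp : s < p)
    (hD : ∀ h, 0 < h → h ≤ h₀ → D * h ^ s ≤ K * (M + H * h ^ p)) :
    D ≤ 2 * K * (M / h₀ ^ s + M ^ ((p - s) / p) * H ^ (s / p)) := by
  have hX : 0 ≤ M ^ ((p - s) / p) * H ^ (s / p) := by positivity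
  rcases le_or_gt (H * h₀ ^ p) M with hlarge | hsmall
  · have h₁ : D * h₀ ^ s ≤ 2 * K * M := by nlinarith [hD h₀ hh₀ le_rfl]
    have h₂ : D ≤ 2 * K * (M / h₀ ^ s) := by
      rw [mul_div_assoc', le_div_iff₀ (by positivity)]; exact h₁
    nlinarith
  have hHpos : 0 < H := pos_of_mul_pos_left (hM.trans_lt hsmall) (by positivity)
  rcases hM.eq_or_lt with rfl | hMpos
  · have hD₀ : D ≤ 0 := by
      refine nonpos_of_forall_le_mul_rpow (c := K * H) (sub_pos.2 hsp) hh₀ fun h hh hhh₀ => ?_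
      have hsplit : h ^ p = h ^ (p - s) * h ^ s := by rw [← Real.rpow_add hh, sub_add_cancel]
      have := hD h hh hhh₀
      rw [zero_add, hsplit] at this
      exact le_of_mul_le_mul_right (this.trans_eq (by ring)) (Real.rpow_pos_of_pos hh s)
    exact hD₀.trans (by positivity)
  -- the scale at which the two terms balance: `H * h ^ p = M`
  set h := (M / H) ^ (1 / p)
  have hhpos : 0 < h := by positivity
  have hhp : h ^ p = M / H := by
    rw [← Real.rpow_mul (by positivity), one_div_mul_cancel hp.ne', Real.rpow_one]
  have hhh₀ : h ≤ h₀ := by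
    rw [← Real.rpow_le_rpow_iff hhpos.le hh₀.le hp, hhp, div_le_iff₀ hHpos]
    linarith
  have hhs : M / h ^ s = M ^ ((p - s) / p) * H ^ (s / p) := by
    rw [← Real.rpow_mul (by positivity), one_div_mul_eq_div, Real.div_rpow hM hH,
      show (p - s) / p = 1 - s / p by field_simp, Real.rpow_sub hMpos, Real.rpow_one]
    field_simp
  have hDh : D ≤ 2 * K * (M / h ^ s) := by
    rw [mul_div_assoc', le_div_iff₀ (by positivity)]
    have := hD h hhpos hhh₀
    rw [hhp, mul_div_cancel₀ M hHpos.ne'] at this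
    linarith
  rw [hhs] at hDh
  nlinarith [div_nonneg hM (Real.rpow_nonneg hh₀.le s)]

def glaeserConst (m : ℕ) (α : ℝ) (s : Fin (m + 1)) : ℝ :=
  2 * (4 * m) ^ (s : ℕ) * (s ! * (∑ j, |fdWeights m s j|) * (1 + (m : ℝ) ^ (m + α)))

theorem glaeserConst_nonneg (m : ℕ) (α : ℝ) (s : Fin (m + 1)) : 0 ≤ glaeserConst m α s := by
  unfold glaeserConst; positivity

theorem abs_deriv_le_glaeserConst {m : ℕ} {α : ℝ} (hα : 0 < α) (s : Fin (m + 1))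
    (hs : 1 ≤ (s : ℕ)) {t₀ δ : ℝ} (hδ : 0 < δ) {d : ℕ → ℝ → ℝ}
    (hd : DerivChain d m (Ioo (t₀ - δ) (t₀ + δ)))
    (hH : ∃ H : ℝ, ∀ x ∈ Ioo (t₀ - δ) (t₀ + δ), ∀ y ∈ Ioo (t₀ - δ) (t₀ + δ),
      |d m x - d m y| ≤ H * |x - y| ^ α)
    (hf : (∀ t ∈ Ioo (t₀ - δ) (t₀ + δ), 0 ≤ d 0 t) ∨ (∀ t ∈ Ioo (t₀ - δ) (t₀ + δ), d 0 t ≤ 0))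
    (hf' : (∀ t ∈ Ioo (t₀ - δ) (t₀ + δ), 0 ≤ d 1 t) ∨ (∀ t ∈ Ioo (t₀ - δ) (t₀ + δ), d 1 t ≤ 0)) :
    |d s t₀| ≤ glaeserConst m α s * ((2 * δ) ^ (s : ℕ))⁻¹ *
      (|d 0 t₀| + |d 0 t₀| ^ (((m : ℝ) + α - (s : ℕ)) / ((m : ℝ) + α)) *
        HolderConst α (Ioo (t₀ - δ) (t₀ + δ)) (d m) ^ (((s : ℕ) : ℝ) / ((m : ℝ) + α)) *
        (2 * δ) ^ (s : ℕ)) := by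
  set I := Ioo (t₀ - δ) (t₀ + δ)
  set M := |d 0 t₀|
  set H := HolderConst α I (d m)
  set K := s ! * (∑ j, |fdWeights m s j|) * (1 + (m : ℝ) ^ (m + α))
  have hm : 0 < m := by omega
  have hm' : (0 : ℝ) < m := by exact_mod_cast hm
  have ht₀ : t₀ ∈ I := ⟨by linarith, by linarith⟩
  obtain ⟨σ, hσ, hside⟩ := exists_abs_le_abs_one_side ht₀ <| monotoneOn_abs_or_antitoneOn_abs
    (hd.monotoneOn_or_antitoneOn hm isOpen_Ioo (convex_Ioo _ _) hf') hf
  set h₀ := 2 * δ / (4 * m)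
  have hscale : ∀ h, 0 < h → h ≤ h₀ →
      |d s t₀| * h ^ ((s : ℕ) : ℝ) ≤ K * (M + H * h ^ ((m : ℝ) + α)) := by
    intro h hh hhh₀
    have hσh : |σ * h| = h := by rw [abs_mul, hσ, one_mul, abs_of_pos hh]
    have hmh : m * h ≤ δ / 2 := by
      rw [le_div_iff₀ (by positivity)] at hhh₀; nlinarith
    have hsub : uIcc t₀ (t₀ + m * (σ * h)) ⊆ I := by
      intro u hu
      have hu' := abs_sub_left_of_mem_uIcc hu
      rw [add_sub_cancel_left, abs_mul, Nat.abs_cast, hσh] at hu'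
      exact ⟨by linarith [neg_abs_le (u - t₀)], by linarith [le_abs_self (u - t₀)]⟩
    have hM : ∀ j : Fin (m + 1), |d 0 (t₀ + j * (σ * h))| ≤ M := fun j => by
      have hj := hsub (add_natCast_mul_mem_uIcc t₀ (σ * h) j.is_le)
      rw [mul_left_comm] at hj ⊢
      exact hside _ (by positivity) hj
    have := abs_mul_pow_le_of_holder hα (hd.mono hsub) hM (holderConst_nonneg _ _ _)
      (fun u hu => norm_sub_le_holderConst_mul (g := d m) hH (hsub hu) ht₀) s
    rw [Real.rpow_natCast]
    rwa [hσh] at this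
  have hsm : ((s : ℕ) : ℝ) ≤ m := by exact_mod_cast s.is_le
  have hopt := le_of_forall_mul_rpow_le (by positivity) (abs_nonneg _) (holderConst_nonneg _ _ _)
    (by positivity : 0 < h₀) (by positivity) (by linarith) hscale
  set X := M ^ (((m : ℝ) + α - (s : ℕ)) / ((m : ℝ) + α)) * H ^ (((s : ℕ) : ℝ) / ((m : ℝ) + α))
  have hX : 0 ≤ X :=
    mul_nonneg (Real.rpow_nonneg (abs_nonneg _) _) (Real.rpow_nonneg (holderConst_nonneg _ _ _) _)
  have hfour : (1 : ℝ) ≤ (4 * m) ^ (s : ℕ) :=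
    one_le_pow₀ (by linarith [(Nat.one_le_cast (α := ℝ)).2 hm])
  calc |d s t₀| ≤ 2 * K * (M / h₀ ^ ((s : ℕ) : ℝ) + X) := hopt
    _ = 2 * K * ((4 * m) ^ (s : ℕ) * ((2 * δ) ^ (s : ℕ))⁻¹ * M + X) := by
        rw [Real.rpow_natCast, div_pow]; field_simp
    _ ≤ 2 * K * ((4 * m) ^ (s : ℕ) * ((2 * δ) ^ (s : ℕ))⁻¹ * M + (4 * m) ^ (s : ℕ) * X) := by
        gcongr; exact le_mul_of_one_le_left hX hfour
    _ = _ := by simp only [glaeserConst, K]; field_simp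

theorem glaeser_higher_order_general (m : ℕ) (αe : ℝ) (hα1 : 0 < αe) :
    ∃ C : ℝ, 0 < C ∧
      ∀ (t₀ δ : ℝ), 0 < δ →
      ∀ d : ℕ → ℝ → ℝ,
      DerivChain d m (Icc (t₀ - δ) (t₀ + δ)) →
      (∃ H : ℝ, ∀ x ∈ Ioo (t₀ - δ) (t₀ + δ), ∀ y ∈ Ioo (t₀ - δ) (t₀ + δ),
        |d m x - d m y| ≤ H * |x - y| ^ αe) →
      ((∀ t ∈ Ioo (t₀ - δ) (t₀ + δ), 0 ≤ d 0 t) ∨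
        (∀ t ∈ Ioo (t₀ - δ) (t₀ + δ), d 0 t ≤ 0)) →
      ((∀ t ∈ Ioo (t₀ - δ) (t₀ + δ), 0 ≤ d 1 t) ∨
        (∀ t ∈ Ioo (t₀ - δ) (t₀ + δ), d 1 t ≤ 0)) →
      ∀ s : ℕ, 1 ≤ s → s ≤ m →
        |d s t₀| ≤ C * ((2 * δ) ^ s)⁻¹ *
          (|d 0 t₀| +
            |d 0 t₀| ^ (((m : ℝ) + αe - (s : ℝ)) / ((m : ℝ) + αe)) *
            (HolderConst αe (Ioo (t₀ - δ) (t₀ + δ)) (d m)) ^ ((s : ℝ) / ((m : ℝ) + αe)) *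
            (2 * δ) ^ s) := by
  have hC : ∀ s, 0 ≤ glaeserConst m αe s := glaeserConst_nonneg m αe
  refine ⟨∑ s, glaeserConst m αe s + 1,
    add_pos_of_nonneg_of_pos (Finset.sum_nonneg fun s _ => hC s) one_pos, ?_⟩
  intro t₀ δ hδ d hd hH hf hf' s hs hsm
  have hbound := abs_deriv_le_glaeserConst hα1 ⟨s, by omega⟩ hs hδ
    (hd.mono Ioo_subset_Icc_self) hH hf hf'
  refine hbound.trans (mul_le_mul_of_nonneg_right (mul_le_mul_of_nonneg_right ?_ ?_) ?_)
  · linarith [Finset.single_le_sum (fun s _ => hC s)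
      (Finset.mem_univ (⟨s, by omega⟩ : Fin (m + 1)))]
  · positivity
  · have := holderConst_nonneg αe (Ioo (t₀ - δ) (t₀ + δ)) (d m)
    positivity

/-- **higher order Glaeser inequalities.** If `f ∈ C^{m,α}(Ī,ℝ)` on
`I = (t₀-δ, t₀+δ)` and `f` and `f'` do not change sign on `I`, then for `1 ≤ s ≤ m`:
`|f^{(s)}(t₀)| ≤ C |I|^{-s} (|f(t₀)| + |f(t₀)|^{(m+α-s)/(m+α)} Höld_{α,I}(f^{(m)})^{s/(m+α)} |I|^s)`
with `C = C(m,α)`. -/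
theorem glaeser_higher_order (m : ℕ) (hm : 1 ≤ m) (αe : ℝ) (hα1 : 0 < αe) (hα2 : αe ≤ 1) :
    ∃ C : ℝ, 0 < C ∧
      ∀ (t₀ δ : ℝ), 0 < δ →
      ∀ d : ℕ → ℝ → ℝ,
      DerivChain d m (Icc (t₀ - δ) (t₀ + δ)) →
      (∃ H : ℝ, ∀ x ∈ Ioo (t₀ - δ) (t₀ + δ), ∀ y ∈ Ioo (t₀ - δ) (t₀ + δ),
        |d m x - d m y| ≤ H * |x - y| ^ αe) →
      ((∀ t ∈ Ioo (t₀ - δ) (t₀ + δ), 0 ≤ d 0 t) ∨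
        (∀ t ∈ Ioo (t₀ - δ) (t₀ + δ), d 0 t ≤ 0)) →
      ((∀ t ∈ Ioo (t₀ - δ) (t₀ + δ), 0 ≤ d 1 t) ∨
        (∀ t ∈ Ioo (t₀ - δ) (t₀ + δ), d 1 t ≤ 0)) →
      ∀ s : ℕ, 1 ≤ s → s ≤ m →
        |d s t₀| ≤ C * ((2 * δ) ^ s)⁻¹ *
          (|d 0 t₀| +
            |d 0 t₀| ^ (((m : ℝ) + αe - (s : ℝ)) / ((m : ℝ) + αe)) *
            (HolderConst αe (Ioo (t₀ - δ) (t₀ + δ)) (d m)) ^ ((s : ℝ) / ((m : ℝ) + αe)) *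
            (2 * δ) ^ s) :=
  glaeser_higher_order_general m αe hα1
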